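/- Let n ≥ 1, d ≥ 1, and N = (n+d−1 choose d). Then k_{H_d} = N−1: for every complex affine hyperplane H ⊆ ℂⁿ the affine hull of H_d(H) has dimension at most N−1, and for every nonzero constant c ∈ ℂ the affine hull of H_d({ z ∈ ℂⁿ : z₁ = c }) has dimension exactly N−1. -/

import Mathlib

noncomputable section

open scoped BigOperators

/-- The annulus `A_{n,r} = { z ∈ ℂⁿ : r < ‖z‖ < 1 }`. -/
def ann (n : ℕ) (r : ℝ) : Set (EuclideanSpace ℂ (Fin n)) :=
  {z | r < ‖z‖ ∧ ‖z‖ < 1}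

/-- `f` is proper as a map from `S` to `T`: preimages (within `S`) of compact subsets
of `T` are compact. -/
def ProperOn {X Y : Type*} [TopologicalSpace X] [TopologicalSpace Y]
    (f : X → Y) (S : Set X) (T : Set Y) : Prop :=
  ∀ K : Set Y, K ⊆ T → IsCompact K → IsCompact (S ∩ f ⁻¹' K)

/-- A proper holomorphic map from `S` to `T`. -/
def IsProperHolo {E F : Type*} [NormedAddCommGroup E] [NormedSpace ℂ E]
    [NormedAddCommGroup F] [NormedSpace ℂ F]
    (f : E → F) (S : Set E) (T : Set F) : Prop :=
  DifferentiableOn ℂ f S ∧ Set.MapsTo f S T ∧ ProperOn f S T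

/-- Dimension of the affine hull (smallest affine subspace containing `S`). -/
def affDim {F : Type*} [NormedAddCommGroup F] [NormedSpace ℂ F] (S : Set F) : ℕ :=
  Module.finrank ℂ (affineSpan ℂ S).direction

/-- The general hyperplane rank `k_f`: the maximum over all complex affine hyperplanes
`H ⊆ ℂⁿ` of the dimension of the affine hull of `f(H ∩ U)`. -/
def genHypRank {n : ℕ} {F : Type*} [NormedAddCommGroup F] [NormedSpace ℂ F]
    (U : Set (EuclideanSpace ℂ (Fin n))) (f : EuclideanSpace ℂ (Fin n) → F) : ℕ :=
  sSup {k : ℕ | ∃ (a : Fin n → ℂ) (b : ℂ), a ≠ 0 ∧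
    k = affDim (f '' ({z | (∑ i, a i * z i) = b} ∩ U))}

/-- Embedding dimension `N_f`: dimension of the affine hull of the image. -/
def embDim {n : ℕ} {F : Type*} [NormedAddCommGroup F] [NormedSpace ℂ F]
    (U : Set (EuclideanSpace ℂ (Fin n))) (f : EuclideanSpace ℂ (Fin n) → F) : ℕ :=
  affDim (f '' U)

/-- Multi-indices `α` on `n` variables with `|α| = d`. -/
abbrev MIdx (n d : ℕ) := {α : Fin n → Fin (d + 1) // ∑ i, (α i : ℕ) = d}

/-- The homogeneous map `H_d` with components `√(d!/α!)·z^α`, indexed by multi-indices of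
degree `d`. -/
def Hd (n d : ℕ) (z : EuclideanSpace ℂ (Fin n)) : EuclideanSpace ℂ (MIdx n d) :=
  WithLp.toLp 2 (fun (α : MIdx n d) => (Real.sqrt ((d.factorial : ℝ) / ∏ i, ((α.1 i : ℕ).factorial : ℝ)) : ℂ) *
    ∏ i, z i ^ (α.1 i : ℕ))

/-- `(w₁,…,w_m, c, 0, …, 0) ∈ ℂᴺ`. -/
def pad {m : ℕ} (N : ℕ) (w : EuclideanSpace ℂ (Fin m)) (c : ℂ) : EuclideanSpace ℂ (Fin N) :=
  WithLp.toLp 2 (fun (j : Fin N) => if h : (j : ℕ) < m then w ⟨j, h⟩ else if (j : ℕ) = m then c else 0)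

/-- Evaluate a polynomial at a point of `ℂⁿ`. -/
def evalP {n : ℕ} (q : MvPolynomial (Fin n) ℂ) (z : EuclideanSpace ℂ (Fin n)) : ℂ :=
  MvPolynomial.eval (fun i => z i) q

/-- The rational map `p/q`. -/
def ratMap {n N : ℕ} (p : Fin N → MvPolynomial (Fin n) ℂ) (q : MvPolynomial (Fin n) ℂ)
    (z : EuclideanSpace ℂ (Fin n)) : EuclideanSpace ℂ (Fin N) :=
  WithLp.toLp 2 (fun (j : Fin N) => evalP (p j) z / evalP q z)

/-- Unitary equivalence of maps on a set `S`. -/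
def UnitarilyEquiv {n N : ℕ} (S : Set (EuclideanSpace ℂ (Fin n)))
    (f g : EuclideanSpace ℂ (Fin n) → EuclideanSpace ℂ (Fin N)) : Prop :=
  ∃ (V : EuclideanSpace ℂ (Fin n) ≃ₗᵢ[ℂ] EuclideanSpace ℂ (Fin n))
    (W : EuclideanSpace ℂ (Fin N) ≃ₗᵢ[ℂ] EuclideanSpace ℂ (Fin N)),
    ∀ z ∈ S, f z = W (g (V z))

namespace HdAux
open Finset

variable {n d : ℕ}

/-- Equivalence between `MIdx n d` and `Sym (Fin n) d`. -/
def midxEquivSym (n d : ℕ) : MIdx n d ≃ Sym (Fin n) d where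
  toFun α := ⟨Finsupp.toMultiset (Finsupp.equivFunOnFinite.symm fun i => (α.1 i : ℕ)), by
    rw [Finsupp.card_toMultiset, Finsupp.sum_fintype]
    · simpa using α.2
    · intro i; rfl⟩
  invFun s := ⟨fun i => ⟨Multiset.count i s.1, by
      have h1 : Multiset.count i s.1 ≤ d := by
        have := Multiset.count_le_card i s.1
        rw [s.2] at this; exact this
      omega⟩, by
    have : ∑ i, Multiset.count i s.1 = Multiset.card s.1 := by
      classical
      conv_rhs => rw [← Multiset.toFinsupp_toMultiset s.1]
      rw [Finsupp.card_toMultiset, Finsupp.sum_fintype]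
      · simp [Multiset.toFinsupp_apply]
      · intro i; rfl
    rw [this, s.2]⟩
  left_inv α := by
    ext i
    simp [Finsupp.count_toMultiset]
  right_inv s := by
    classical
    apply Subtype.ext
    show Finsupp.toMultiset _ = s.1
    conv_rhs => rw [← Multiset.toFinsupp_toMultiset s.1]
    congr 1
    ext i
    simp [Multiset.toFinsupp_apply]

lemma card_midx (n d : ℕ) :
    Fintype.card (MIdx n d) = (n + d - 1).choose d := by
  rw [Fintype.card_congr (midxEquivSym n d), Sym.card_sym_eq_choose, Fintype.card_fin]

end HdAux
namespace HdAux
open Finset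

variable {n d : ℕ}

/-- Expansion of a linear functional on Euclidean space in coordinates. -/
lemma dual_expand {ι : Type*} [Fintype ι] [DecidableEq ι]
    (lam : EuclideanSpace ℂ ι →ₗ[ℂ] ℂ) (w : EuclideanSpace ℂ ι) :
    lam w = ∑ i, w i * lam (EuclideanSpace.single i 1) := by
  have hw : w = ∑ i, w i • EuclideanSpace.single i (1 : ℂ) := by
    have := (EuclideanSpace.basisFun ι ℂ).sum_repr w
    simp only [EuclideanSpace.basisFun_repr, EuclideanSpace.basisFun_apply] at this
    exact this.symm
  conv_lhs => rw [hw]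
  rw [map_sum]
  simp [smul_eq_mul]

/-- The sqrt coefficient of `Hd`. -/
lemma sq_coeff_pos (α : MIdx n d) :
    0 < Real.sqrt ((d.factorial : ℝ) / ∏ i, ((α.1 i : ℕ).factorial : ℝ)) := by
  apply Real.sqrt_pos.2
  apply div_pos
  · exact_mod_cast Nat.factorial_pos d
  · apply Finset.prod_pos; intro i _; exact_mod_cast Nat.factorial_pos _

lemma sq_coeff_sq (α : MIdx n d) :
    (Real.sqrt ((d.factorial : ℝ) / ∏ i, ((α.1 i : ℕ).factorial : ℝ)) : ℂ) *
      (Real.sqrt ((d.factorial : ℝ) / ∏ i, ((α.1 i : ℕ).factorial : ℝ)) : ℂ) =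
    ((Nat.multinomial Finset.univ fun i => (α.1 i : ℕ)) : ℂ) := by
  have h0 : (0:ℝ) ≤ (d.factorial : ℝ) / ∏ i, ((α.1 i : ℕ).factorial : ℝ) :=
    le_of_lt (by
      apply div_pos
      · exact_mod_cast Nat.factorial_pos d
      · apply Finset.prod_pos; intro i _; exact_mod_cast Nat.factorial_pos _)
  rw [← Complex.ofReal_mul, Real.mul_self_sqrt h0]
  have hspec := Nat.multinomial_spec Finset.univ (fun i => (α.1 i : ℕ))
  rw [α.2] at hspec
  have hprod : (0:ℝ) < ∏ i, ((α.1 i : ℕ).factorial : ℝ) := by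
    apply Finset.prod_pos; intro i _; exact_mod_cast Nat.factorial_pos _
  have : ((d.factorial : ℝ)) = (∏ i, ((α.1 i : ℕ).factorial : ℝ)) *
      ((Nat.multinomial Finset.univ fun i => (α.1 i : ℕ)) : ℝ) := by
    rw [← hspec]; push_cast; ring
  have h2 : (d.factorial : ℝ) / (∏ i, ((α.1 i : ℕ).factorial : ℝ)) =
      ((Nat.multinomial Finset.univ fun i => (α.1 i : ℕ)) : ℝ) := by
    rw [div_eq_iff (ne_of_gt hprod), ← hspec]; push_cast; ring
  rw [h2]
  norm_num

/-- `MIdx n d` is equivalent to the antidiagonal of functions summing to `d`. -/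
def midxEquivAnti (n d : ℕ) : MIdx n d ≃ {k : Fin n → ℕ // k ∈ Finset.piAntidiag Finset.univ d} where
  toFun α := ⟨fun i => (α.1 i : ℕ), by simp [Finset.mem_piAntidiag, α.2]⟩
  invFun k := ⟨fun i => ⟨k.1 i, by
      have hm := k.2
      rw [Finset.mem_piAntidiag] at hm
      have h1 : k.1 i ≤ Finset.univ.sum k.1 :=
        Finset.single_le_sum (fun j _ => Nat.zero_le _) (Finset.mem_univ i)
      omega⟩, by
    have hm := k.2
    rw [Finset.mem_piAntidiag] at hm
    simpa using hm.1⟩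
  left_inv α := by ext i; rfl
  right_inv k := by ext i; rfl

/-- Multinomial theorem indexed by `MIdx`. -/
lemma multinomial_midx (f : Fin n → ℂ) :
    (∑ i, f i) ^ d =
      ∑ α : MIdx n d, ((Nat.multinomial Finset.univ fun i => (α.1 i : ℕ)) : ℂ) *
        ∏ i, f i ^ (α.1 i : ℕ) := by
  rw [Finset.sum_pow_eq_sum_piAntidiag, ← Finset.sum_coe_sort]
  exact Fintype.sum_equiv (midxEquivAnti n d).symm _ _ (fun k => rfl)

end HdAux
namespace HdAux
open Finset

variable {n d : ℕ}

/-- Shorthand for the sqrt coefficient as a complex number. -/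
def sqcC (α : MIdx n d) : ℂ :=
  (Real.sqrt ((d.factorial : ℝ) / ∏ i, ((α.1 i : ℕ).factorial : ℝ)) : ℂ)

lemma sqcC_ne_zero (α : MIdx n d) : sqcC α ≠ 0 := by
  simp only [sqcC, ne_eq, Complex.ofReal_eq_zero]
  exact ne_of_gt (sq_coeff_pos α)

lemma Hd_apply (z : EuclideanSpace ℂ (Fin n)) (α : MIdx n d) :
    Hd n d z α = sqcC α * ∏ i, z i ^ (α.1 i : ℕ) := rfl

/-- The linear functional `w ↦ ∑ α √(d!/α!) a^α w_α`. -/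
def lamA (a : Fin n → ℂ) : EuclideanSpace ℂ (MIdx n d) →ₗ[ℂ] ℂ where
  toFun w := ∑ α, (sqcC α * ∏ i, a i ^ (α.1 i : ℕ)) * w α
  map_add' x y := by
    simp only [PiLp.add_apply, mul_add]
    rw [Finset.sum_add_distrib]
  map_smul' r x := by
    simp only [PiLp.smul_apply, smul_eq_mul, RingHom.id_apply, Finset.mul_sum]
    congr 1; ext α; ring

lemma lamA_Hd (a : Fin n → ℂ) (z : EuclideanSpace ℂ (Fin n)) :
    lamA a (Hd n d z) = (∑ i, a i * z i) ^ d := by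
  rw [multinomial_midx]
  show ∑ α : MIdx n d, (sqcC α * ∏ i, a i ^ (α.1 i : ℕ)) * Hd n d z α = _
  apply Finset.sum_congr rfl
  intro α _
  rw [Hd_apply]
  have h1 : ∏ i, (a i * z i) ^ (α.1 i : ℕ) =
      (∏ i, a i ^ (α.1 i : ℕ)) * ∏ i, z i ^ (α.1 i : ℕ) := by
    rw [← Finset.prod_mul_distrib]
    apply Finset.prod_congr rfl
    intro i _; rw [mul_pow]
  rw [h1, ← sq_coeff_sq α]
  show (sqcC α * _) * (sqcC α * _) = sqcC α * sqcC α * _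
  ring

lemma lamA_single [DecidableEq (MIdx n d)] (a : Fin n → ℂ) (β : MIdx n d) :
    lamA a (EuclideanSpace.single β 1) = sqcC β * ∏ i, a i ^ (β.1 i : ℕ) := by
  show ∑ α : MIdx n d, (sqcC α * ∏ i, a i ^ (α.1 i : ℕ)) *
      (EuclideanSpace.single β (1:ℂ)) α = _
  rw [Finset.sum_eq_single β]
  · simp [EuclideanSpace.single_apply]
  · intro α _ hα
    simp [EuclideanSpace.single_apply, hα]
  · intro h; exact absurd (Finset.mem_univ β) h

/-- The multi-index `d·e_{i₀}`. -/
def dIdx (n d : ℕ) (i₀ : Fin n) : MIdx n d :=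
  ⟨fun i => if i = i₀ then Fin.last d else 0, by
    simp [apply_ite, Finset.sum_ite_eq', Fin.val_last]⟩

lemma prod_pow_dIdx (i₀ : Fin n) (a : Fin n → ℂ) :
    ∏ i, a i ^ (((dIdx n d i₀).1 i : ℕ)) = a i₀ ^ d := by
  simp only [dIdx, apply_ite, Fin.val_last, Fin.val_zero, pow_zero]
  rw [Finset.prod_ite_eq' Finset.univ i₀ (fun i => a i ^ d)]
  simp

lemma lamA_ne_zero (a : Fin n → ℂ) (ha : a ≠ 0) : lamA (n := n) (d := d) a ≠ 0 := by
  classical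
  obtain ⟨i₀, hi₀⟩ : ∃ i, a i ≠ 0 := by
    by_contra h
    push_neg at h
    exact ha (funext h)
  intro h0
  have := congrArg (fun f : EuclideanSpace ℂ (MIdx n d) →ₗ[ℂ] ℂ =>
    f (EuclideanSpace.single (dIdx n d i₀) 1)) h0
  simp only [lamA_single, LinearMap.zero_apply] at this
  rw [prod_pow_dIdx] at this
  exact (mul_ne_zero (sqcC_ne_zero _) (pow_ne_zero d hi₀)) this

lemma finrank_eucl (n d N : ℕ) (hN : N = (n + d - 1).choose d) :
    Module.finrank ℂ (EuclideanSpace ℂ (MIdx n d)) = N := by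
  rw [finrank_euclideanSpace, card_midx, hN]

/-- Part 1: upper bound. -/
lemma part1 (n d N : ℕ) (hN : N = (n + d - 1).choose d)
    (a : Fin n → ℂ) (ha : a ≠ 0) (b : ℂ) :
    affDim (Hd n d '' {z | (∑ i, a i * z i) = b}) ≤ N - 1 := by
  classical
  set T := Hd n d '' {z | (∑ i, a i * z i) = b} with hT
  have hker : vectorSpan ℂ T ≤ LinearMap.ker (lamA a) := by
    rw [vectorSpan_def]
    apply Submodule.span_le.2
    rintro v hv
    rw [Set.mem_vsub] at hv
    obtain ⟨x, hx, y, hy, rfl⟩ := hv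
    obtain ⟨z₁, hz₁, rfl⟩ := hx
    obtain ⟨z₂, hz₂, rfl⟩ := hy
    rw [SetLike.mem_coe, LinearMap.mem_ker, vsub_eq_sub, map_sub, lamA_Hd, lamA_Hd,
      hz₁, hz₂, sub_self]
  have hdim : affDim T = Module.finrank ℂ (vectorSpan ℂ T) := by
    rw [affDim, direction_affineSpan]
  rw [hdim]
  have h1 := Submodule.finrank_mono hker
  have h2 := Module.Dual.finrank_ker_add_one_of_ne_zero (lamA_ne_zero (d := d) a ha)
  rw [finrank_eucl n d N hN] at h2
  omega

end HdAux
namespace HdAux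
open Finset

variable {n d : ℕ}

/-- The "tail" multi-index: forget the `i₀` entry. -/
def tailIdx (i₀ : Fin n) (α : MIdx n d) : Fin n →₀ ℕ :=
  Finsupp.equivFunOnFinite.symm (fun i => if i = i₀ then 0 else (α.1 i : ℕ))

lemma tailIdx_apply (i₀ : Fin n) (α : MIdx n d) (i : Fin n) :
    tailIdx i₀ α i = if i = i₀ then 0 else (α.1 i : ℕ) := rfl

lemma sum_split (i₀ : Fin n) (α : MIdx n d) :
    (α.1 i₀ : ℕ) + ∑ i ∈ Finset.univ.erase i₀, (α.1 i : ℕ) = d := by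
  have h1 := Finset.add_sum_erase Finset.univ (fun i => ((α.1 i : ℕ))) (Finset.mem_univ i₀)
  have h2 := α.2
  omega

lemma tailIdx_inj (i₀ : Fin n) : Function.Injective (tailIdx (d := d) i₀) := by
  intro α β h
  have hfun : ∀ i, (if i = i₀ then 0 else (α.1 i : ℕ)) = (if i = i₀ then 0 else (β.1 i : ℕ)) := by
    intro i
    have := congrArg (fun f => f i) h
    simpa [tailIdx_apply] using this
  have htail : ∀ i ∈ Finset.univ.erase i₀, (α.1 i : ℕ) = (β.1 i : ℕ) := by
    intro i hi
    have hne : i ≠ i₀ := (Finset.mem_erase.1 hi).1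
    simpa [hne] using hfun i
  have hsum : ∑ i ∈ Finset.univ.erase i₀, (α.1 i : ℕ) =
      ∑ i ∈ Finset.univ.erase i₀, (β.1 i : ℕ) := Finset.sum_congr rfl htail
  have h₀ : (α.1 i₀ : ℕ) = (β.1 i₀ : ℕ) := by
    have h1 := sum_split i₀ α
    have h2 := sum_split i₀ β
    omega
  apply Subtype.ext
  funext i
  by_cases hi : i = i₀
  · subst hi; exact Fin.ext h₀
  · exact Fin.ext (by simpa [hi] using hfun i)

lemma eq_dIdx_of_tail_zero (i₀ : Fin n) (β : MIdx n d)
    (h : ∀ i, i ≠ i₀ → (β.1 i : ℕ) = 0) : β = dIdx n d i₀ := by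
  apply Subtype.ext
  funext i
  by_cases hi : i = i₀
  · subst hi
    have h1 := sum_split i β
    have h2 : ∑ j ∈ Finset.univ.erase i, (β.1 j : ℕ) = 0 := by
      apply Finset.sum_eq_zero
      intro j hj
      exact h j (Finset.mem_erase.1 hj).1
    apply Fin.ext
    simp [dIdx, Fin.val_last]
    omega
  · apply Fin.ext
    simp [dIdx, hi]
    rw [Fin.ext_iff, Fin.val_zero]
    exact h i hi

lemma tailIdx_ne_zero (i₀ : Fin n) (β : MIdx n d) (hβ : β ≠ dIdx n d i₀) :
    tailIdx i₀ β ≠ 0 := by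
  intro h0
  apply hβ
  apply eq_dIdx_of_tail_zero
  intro i hi
  have := congrArg (fun f => f i) h0
  simpa [tailIdx_apply, hi] using this

/-- Core lemma: a linear functional constant on `Hd` of the hyperplane `{z i₀ = c}` has
vanishing coefficients away from `dIdx n d i₀`. -/
lemma coeff_vanish (i₀ : Fin n) (c : ℂ) (hc : c ≠ 0)
    (lam : EuclideanSpace ℂ (MIdx n d) →ₗ[ℂ] ℂ) (b : ℂ)
    (h : ∀ z : EuclideanSpace ℂ (Fin n), z i₀ = c → lam (Hd n d z) = b)
    (β : MIdx n d) (hβ : β ≠ dIdx n d i₀) :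
    lam (EuclideanSpace.single β 1) = 0 := by
  classical
  set e : MIdx n d → ℂ := fun α => lam (EuclideanSpace.single α 1) with he
  set P : MvPolynomial (Fin n) ℂ :=
    (∑ α : MIdx n d, MvPolynomial.monomial (tailIdx i₀ α)
      (e α * sqcC α * c ^ (α.1 i₀ : ℕ))) - MvPolynomial.C b with hP
  have heval : ∀ x : Fin n → ℂ, MvPolynomial.eval x P = 0 := by
    intro x
    set z : EuclideanSpace ℂ (Fin n) := WithLp.toLp 2 (fun i => if i = i₀ then c else x i) with hz
    have hzc : z i₀ = c := if_pos rfl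
    have hb := h z hzc
    rw [dual_expand] at hb
    rw [hP, map_sub, MvPolynomial.eval_C, map_sum, sub_eq_zero, ← hb]
    apply Finset.sum_congr rfl
    intro α _
    rw [MvPolynomial.eval_monomial, Hd_apply]
    have hprod : (Finsupp.prod (tailIdx i₀ α) fun i k => x i ^ k) =
        ∏ i, x i ^ (tailIdx i₀ α i) := by
      apply Finsupp.prod_fintype
      intro i; exact pow_zero _
    rw [hprod]
    have hsplit : ∏ i, z i ^ (α.1 i : ℕ) =
        c ^ (α.1 i₀ : ℕ) * ∏ i, x i ^ (tailIdx i₀ α i) := by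
      rw [← Finset.mul_prod_erase Finset.univ (fun i => z i ^ (α.1 i : ℕ))
        (Finset.mem_univ i₀), ← Finset.mul_prod_erase Finset.univ
        (fun i => x i ^ (tailIdx i₀ α i)) (Finset.mem_univ i₀)]
      have h1 : (tailIdx i₀ α i₀) = 0 := by simp [tailIdx_apply]
      rw [h1, pow_zero, one_mul, hzc]
      congr 1
      apply Finset.prod_congr rfl
      intro i hi
      have hne : i ≠ i₀ := (Finset.mem_erase.1 hi).1
      rw [tailIdx_apply]
      simp [hz, hne]
    rw [hsplit]
    ring
  have hP0 : P = 0 := by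
    apply MvPolynomial.funext
    intro x
    rw [heval x, map_zero]
  have hco := congrArg (MvPolynomial.coeff (tailIdx i₀ β)) hP0
  rw [hP] at hco
  rw [MvPolynomial.coeff_sub, MvPolynomial.coeff_sum, MvPolynomial.coeff_C] at hco
  rw [Finset.sum_eq_single β] at hco
  · rw [MvPolynomial.coeff_monomial, if_pos rfl] at hco
    rw [if_neg (fun h' => tailIdx_ne_zero i₀ β hβ h'.symm)] at hco
    simp only [MvPolynomial.coeff_zero, sub_zero] at hco
    have := mul_ne_zero (sqcC_ne_zero β) (pow_ne_zero (β.1 i₀ : ℕ) hc)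
    have h2 : e β * (sqcC β * c ^ (β.1 i₀ : ℕ)) = 0 := by rw [← mul_assoc]; exact hco
    rcases mul_eq_zero.1 h2 with h3 | h3
    · exact h3
    · exact absurd h3 this
  · intro α _ hα
    rw [MvPolynomial.coeff_monomial]
    rw [if_neg (fun h' => hα (tailIdx_inj i₀ h'))]
  · intro hmem; exact absurd (Finset.mem_univ β) hmem

end HdAux
namespace HdAux
open Finset

variable {n d : ℕ}

/-- The coordinate functional at `dIdx n d i₀`. -/
def coordTop (n d : ℕ) (i₀ : Fin n) : EuclideanSpace ℂ (MIdx n d) →ₗ[ℂ] ℂ where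
  toFun w := w (dIdx n d i₀)
  map_add' x y := rfl
  map_smul' r x := rfl

lemma coordTop_ne_zero (i₀ : Fin n) : coordTop n d i₀ ≠ 0 := by
  classical
  intro h
  have := congrArg (fun f : EuclideanSpace ℂ (MIdx n d) →ₗ[ℂ] ℂ =>
    f (EuclideanSpace.single (dIdx n d i₀) 1)) h
  simp only [coordTop, LinearMap.coe_mk, AddHom.coe_mk, LinearMap.zero_apply] at this
  change (EuclideanSpace.single (dIdx n d i₀) (1:ℂ)) (dIdx n d i₀) = 0 at this
  rw [EuclideanSpace.single_apply, if_pos rfl] at this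
  exact one_ne_zero this

/-- Part 2 lower bound. -/
lemma part2_ge (n d N : ℕ) (hN : N = (n + d - 1).choose d)
    (i₀ : Fin n) (c : ℂ) (hc : c ≠ 0) :
    N - 1 ≤ affDim (Hd n d '' {z : EuclideanSpace ℂ (Fin n) | z i₀ = c}) := by
  classical
  set T := Hd n d '' {z : EuclideanSpace ℂ (Fin n) | z i₀ = c} with hT
  set W : Submodule ℂ (EuclideanSpace ℂ (MIdx n d)) := vectorSpan ℂ T with hW
  have hdim : affDim T = Module.finrank ℂ W := by
    rw [affDim, direction_affineSpan]
  rw [hdim]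
  -- the base point
  set zs : EuclideanSpace ℂ (Fin n) := WithLp.toLp 2 (fun i => if i = i₀ then c else 0) with hzs
  have hzsT : Hd n d zs ∈ T := ⟨zs, if_pos rfl, rfl⟩
  -- annihilator is small
  have hann : W.dualAnnihilator ≤ Submodule.span ℂ {coordTop n d i₀} := by
    intro lam hlam
    rw [Submodule.mem_dualAnnihilator] at hlam
    have hconst : ∀ z : EuclideanSpace ℂ (Fin n), z i₀ = c →
        lam (Hd n d z) = lam (Hd n d zs) := by
      intro z hz
      have hmem : Hd n d z - Hd n d zs ∈ W := by
        have hzT : Hd n d z ∈ T :=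
          Set.mem_image_of_mem _ (show z ∈ {z : EuclideanSpace ℂ (Fin n) | z i₀ = c} from hz)
        have := vsub_mem_vectorSpan ℂ hzT hzsT
        rwa [vsub_eq_sub] at this
      have := hlam _ hmem
      rw [map_sub, sub_eq_zero] at this
      exact this
    have hcoeff : ∀ β : MIdx n d, β ≠ dIdx n d i₀ →
        lam (EuclideanSpace.single β 1) = 0 :=
      coeff_vanish i₀ c hc lam (lam (Hd n d zs)) hconst
    rw [Submodule.mem_span_singleton]
    refine ⟨lam (EuclideanSpace.single (dIdx n d i₀) 1), ?_⟩
    apply LinearMap.ext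
    intro w
    rw [dual_expand lam w]
    rw [Finset.sum_eq_single (dIdx n d i₀)]
    · simp only [LinearMap.smul_apply, smul_eq_mul, coordTop, LinearMap.coe_mk,
        AddHom.coe_mk]
      change _ * w (dIdx n d i₀) = _
      ring
    · intro β _ hβ
      rw [hcoeff β hβ, mul_zero]
    · intro hmem; exact absurd (Finset.mem_univ _) hmem
  have h1 : Module.finrank ℂ W.dualAnnihilator ≤ 1 := by
    refine le_trans (Submodule.finrank_mono hann) ?_
    rw [finrank_span_singleton (coordTop_ne_zero i₀)]
  have h2 : Module.finrank ℂ (EuclideanSpace ℂ (MIdx n d) ⧸ W) =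
      Module.finrank ℂ W.dualAnnihilator :=
    (Subspace.quotEquivAnnihilator W).finrank_eq
  have h3 := Submodule.finrank_quotient_add_finrank W
  rw [finrank_eucl n d N hN] at h3
  omega

end HdAux
/-- **The homogeneous map has `k_{H_d} = N−1`** where `N = (n+d−1 choose d)`: the affine
hull of the image of every affine hyperplane has dimension at most `N−1`, and for the
hyperplanes `{z₁ = c}`, `c ≠ 0`, the dimension is exactly `N−1`. -/
theorem hyperplane_rank_of_Hd (n d N : ℕ) (hn : 1 ≤ n) (hd : 1 ≤ d)
    (hN : N = (n + d - 1).choose d) :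
    (∀ a : Fin n → ℂ, a ≠ 0 → ∀ b : ℂ,
        affDim (Hd n d '' {z | (∑ i, a i * z i) = b}) ≤ N - 1) ∧
      (∀ c : ℂ, c ≠ 0 →
        affDim (Hd n d '' {z | z ⟨0, hn⟩ = c}) = N - 1) := by
  constructor
  · intro a ha b
    exact HdAux.part1 n d N hN a ha b
  · intro c hc
    apply le_antisymm
    · have hset : {z : EuclideanSpace ℂ (Fin n) | z ⟨0, hn⟩ = c} =
          {z : EuclideanSpace ℂ (Fin n) |
            (∑ i, (fun j => if j = (⟨0, hn⟩ : Fin n) then (1:ℂ) else 0) i * z i) = c} := by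
        ext z
        simp only [Set.mem_setOf_eq, ite_mul, one_mul, zero_mul]
        rw [Finset.sum_ite_eq' Finset.univ (⟨0, hn⟩ : Fin n) (fun i => z i)]
        simp
      rw [hset]
      refine HdAux.part1 n d N hN _ ?_ c
      intro h
      have := congrFun h (⟨0, hn⟩ : Fin n)
      simp at this
    · exact HdAux.part2_ge n d N hN ⟨0, hn⟩ c hc
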